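/- arXiv:2007.07433 — 2 statements merged into one kernel-verified Lean document; each statement's English description precedes it below -/
import Mathlib

section
/- The cone T(M) = {X ⪰ 0 : ⟨M,X⟩ = 0 ∀M ∈ M} is rank-one generated if and only if for every nonzero X ∈ T(M), the range of X contains a nonzero vector x with xᵀMx = 0 for all M ∈ M. -/
open Matrix Set

noncomputable section

/-- The set of rank-one (outer product) matrices `x xᵀ`. -/
def RankOneSet (n : ℕ) : Set (Matrix (Fin n) (Fin n) ℝ) :=
  {X | ∃ x : Fin n → ℝ, X = vecMulVec x x}

/-- A set of PSD matrices is rank-one generated if it equals the convex hull of its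
rank-one members. -/
def IsROG {n : ℕ} (S : Set (Matrix (Fin n) (Fin n) ℝ)) : Prop :=
  S = convexHull ℝ (S ∩ RankOneSet n)

/-- `ℝ₊X` is an extreme ray of `S`: `X ∈ S`, `X ≠ 0`, and whenever `X = (Y+Z)/2` with
`Y, Z ∈ S`, both `Y` and `Z` lie on the ray `ℝ₊X`. -/
def IsExtremeRay' {n : ℕ} (S : Set (Matrix (Fin n) (Fin n) ℝ))
    (X : Matrix (Fin n) (Fin n) ℝ) : Prop :=
  X ∈ S ∧ X ≠ 0 ∧ ∀ Y ∈ S, ∀ Z ∈ S, X = (1/2 : ℝ) • (Y + Z) →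
    (∃ α : ℝ, 0 ≤ α ∧ Y = α • X) ∧ (∃ β : ℝ, 0 ≤ β ∧ Z = β • X)

/-- `S(𝓜) = {X ⪰ 0 : ⟨N, X⟩ ≥ 0 ∀ N ∈ 𝓜}` with the trace inner product. -/
def SCone {n : ℕ} (𝓜 : Set (Matrix (Fin n) (Fin n) ℝ)) : Set (Matrix (Fin n) (Fin n) ℝ) :=
  {X | X.PosSemidef ∧ ∀ N ∈ 𝓜, 0 ≤ (N * X).trace}

/-- `T(𝓜) = {X ⪰ 0 : ⟨N, X⟩ = 0 ∀ N ∈ 𝓜}` with the trace inner product. -/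
def TCone {n : ℕ} (𝓜 : Set (Matrix (Fin n) (Fin n) ℝ)) : Set (Matrix (Fin n) (Fin n) ℝ) :=
  {X | X.PosSemidef ∧ ∀ N ∈ 𝓜, (N * X).trace = 0}

/-! If `T(𝓜)` is the convex hull of its rank-one members, a nonzero `X ∈ T(𝓜)` dominates, in
the Loewner order, a positive multiple of some nonzero `x xᵀ ∈ T(𝓜)`; then `ker X ⊆ x^⊥`, so `x`
lies in the range of `X`, and `xᵀ N x = ⟨N, x xᵀ⟩ = 0`.

Conversely, given `x = X y` in the range of `X ∈ T(𝓜)` with `xᵀ N x = 0` for all `N ∈ 𝓜`, the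
Cauchy–Schwarz inequality for the form `(u, v) ↦ uᵀ X v` shows that `X - (yᵀ X y)⁻¹ x xᵀ` is
positive semidefinite. It lies in `T(𝓜)`, and its kernel contains `y` besides `ker X`, so its rank
is smaller; induction on the rank writes `X` as a sum of rank-one members of `T(𝓜)`. -/

open scoped MatrixOrder Pointwise

lemma exists_pos_smul_le_of_mem_convexHull {E : Type*} [AddCommGroup E] [PartialOrder E]
    [IsOrderedAddMonoid E] [Module ℝ E] [PosSMulMono ℝ E] {s : Set E} (hs : ∀ z ∈ s, 0 ≤ z)
    {x : E} (hx : x ∈ convexHull ℝ s) (hx0 : x ≠ 0) :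
    ∃ z ∈ s, z ≠ 0 ∧ ∃ w : ℝ, 0 < w ∧ w • z ≤ x := by
  obtain ⟨ι, _, w, z, hw, -, hz, rfl⟩ := mem_convexHull_iff_exists_fintype.mp hx
  obtain ⟨i, -, hi⟩ := Finset.exists_ne_zero_of_sum_ne_zero hx0
  refine ⟨z i, hz i, fun h => hi (by simp [h]), w i,
    (hw i).lt_of_ne fun h => hi (by simp [← h]), ?_⟩
  exact Finset.single_le_sum (fun j _ => smul_nonneg (hw j) (hs _ (hz j))) (Finset.mem_univ i)

lemma add_mem_convexHull_of_smul_mem {E : Type*} [AddCommGroup E] [Module ℝ E] {s : Set E}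
    (hs : ∀ c : ℝ, 0 < c → ∀ z ∈ s, c • z ∈ s) {a b : E} (ha : a ∈ convexHull ℝ s)
    (hb : b ∈ convexHull ℝ s) : a + b ∈ convexHull ℝ s := by
  have hmid : (2⁻¹ : ℝ) • a + (2⁻¹ : ℝ) • b ∈ convexHull ℝ s :=
    convex_convexHull ℝ s ha hb (by norm_num) (by norm_num) (by norm_num)
  have hdouble : (2 : ℝ) • convexHull ℝ s ⊆ convexHull ℝ s := by
    rw [← convexHull_smul]
    exact convexHull_mono (Set.smul_set_subset_iff.mpr fun z hz => hs 2 two_pos z hz)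
  simpa [smul_add, smul_smul] using hdouble (Set.smul_mem_smul_set (a := (2 : ℝ)) hmid)

namespace Matrix

lemma smul_vecMulVec_self {ι : Type*} {c : ℝ} (hc : 0 ≤ c) (x : ι → ℝ) :
    c • vecMulVec x x = vecMulVec (√c • x) (√c • x) := by
  rw [smul_vecMulVec, vecMulVec_smul, smul_smul, Real.mul_self_sqrt hc]

lemma rank_lt_rank_of_ker_lt {K m n : Type*} [Field K] [Fintype n] {A B : Matrix m n K}
    (h : LinearMap.ker A.mulVecLin < LinearMap.ker B.mulVecLin) : B.rank < A.rank := by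
  have hA := LinearMap.finrank_range_add_finrank_ker A.mulVecLin
  have hB := LinearMap.finrank_range_add_finrank_ker B.mulVecLin
  have hker := Submodule.finrank_lt_finrank_of_lt h
  unfold rank
  omega

variable {ι : Type*} [Fintype ι]

lemma vecMulVec_self_mulVec (x v : ι → ℝ) : vecMulVec x x *ᵥ v = (x ⬝ᵥ v) • x := by
  rw [vecMulVec_mulVec, op_smul_eq_smul]

lemma trace_mul_vecMulVec_self (N : Matrix ι ι ℝ) (x : ι → ℝ) :
    (N * vecMulVec x x).trace = x ⬝ᵥ N *ᵥ x := by
  rw [mul_vecMulVec, trace_vecMulVec, dotProduct_comm]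

lemma posSemidef_vecMulVec_self (x : ι → ℝ) : (vecMulVec x x).PosSemidef := by
  simpa using posSemidef_vecMulVec_self_star x

lemma IsHermitian.mulVec_dotProduct {X : Matrix ι ι ℝ} (hX : X.IsHermitian) (u v : ι → ℝ) :
    X *ᵥ u ⬝ᵥ v = u ⬝ᵥ X *ᵥ v := by
  rw [dotProduct_mulVec, ← mulVec_transpose, ← conjTranspose_eq_transpose_of_trivial, hX.eq]

lemma IsHermitian.exists_mulVec_eq {X : Matrix ι ι ℝ} (hX : X.IsHermitian) {x : ι → ℝ}
    (hx : ∀ v, X *ᵥ v = 0 → x ⬝ᵥ v = 0) : ∃ y, X *ᵥ y = x := by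
  classical
  have hmem : WithLp.toLp 2 x ∈ LinearMap.range (toEuclideanLin X) := by
    rw [← Submodule.orthogonal_orthogonal (LinearMap.range _),
      (isSymmetric_toEuclideanLin_iff.mpr hX).orthogonal_range, Submodule.mem_orthogonal]
    intro v hv
    rw [LinearMap.mem_ker, toLpLin_apply] at hv
    have hxv := hx v.ofLp (by simpa using congrArg WithLp.ofLp hv)
    simpa [PiLp.inner_apply, dotProduct, mul_comm] using hxv
  obtain ⟨y, hy⟩ := hmem
  exact ⟨y.ofLp, by simpa [toLpLin_apply] using congrArg WithLp.ofLp hy⟩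

lemma PosSemidef.dotProduct_mulVec_sq_le {X : Matrix ι ι ℝ} (hX : X.PosSemidef) (u v : ι → ℝ) :
    (u ⬝ᵥ X *ᵥ v) ^ 2 ≤ (u ⬝ᵥ X *ᵥ u) * (v ⬝ᵥ X *ᵥ v) := by
  have hquad (s : ℝ) :
      0 ≤ (u ⬝ᵥ X *ᵥ u) * (s * s) + 2 * (u ⬝ᵥ X *ᵥ v) * s + v ⬝ᵥ X *ᵥ v := by
    have h := hX.dotProduct_mulVec_nonneg (v + s • u)
    have hsymm : v ⬝ᵥ X *ᵥ u = u ⬝ᵥ X *ᵥ v := by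
      rw [← hX.1.mulVec_dotProduct, dotProduct_comm]
    simp only [star_trivial, mulVec_add, mulVec_smul, add_dotProduct, dotProduct_add,
      smul_dotProduct, dotProduct_smul, smul_eq_mul, hsymm] at h
    linear_combination h
  have hdiscr := discrim_le_zero hquad
  rw [discrim] at hdiscr
  linarith

lemma mulVec_eq_zero_of_le {A X : Matrix ι ι ℝ} (hA : 0 ≤ A) (hAX : A ≤ X) {v : ι → ℝ}
    (hv : X *ᵥ v = 0) : A *ᵥ v = 0 := by
  rw [nonneg_iff_posSemidef] at hA
  have hAv := hA.dotProduct_mulVec_nonneg v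
  have hXAv := (le_iff.mp hAX).dotProduct_mulVec_nonneg v
  rw [sub_mulVec, hv, zero_sub, dotProduct_neg] at hXAv
  exact (hA.dotProduct_mulVec_zero_iff v).mp (by linarith)

lemma exists_mulVec_eq_of_smul_vecMulVec_le {X : Matrix ι ι ℝ} (hX : X.IsHermitian) {w : ℝ}
    (hw : 0 < w) {x : ι → ℝ} (hle : w • vecMulVec x x ≤ X) : ∃ y, X *ᵥ y = x := by
  refine hX.exists_mulVec_eq fun v hv => ?_
  have hwx := mulVec_eq_zero_of_le
    (nonneg_iff_posSemidef.mpr ((posSemidef_vecMulVec_self x).smul hw.le)) hle hv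
  have hquad := congrArg (v ⬝ᵥ ·) hwx
  simp only [smul_mulVec, vecMulVec_self_mulVec, dotProduct_smul, smul_eq_mul,
    dotProduct_comm v x, dotProduct_zero, mul_eq_zero, hw.ne', false_or, or_self] at hquad
  exact hquad

lemma PosSemidef.inv_smul_vecMulVec_mulVec_le {X : Matrix ι ι ℝ} (hX : X.PosSemidef)
    (y : ι → ℝ) : (y ⬝ᵥ X *ᵥ y)⁻¹ • vecMulVec (X *ᵥ y) (X *ᵥ y) ≤ X := by
  have hc : 0 ≤ y ⬝ᵥ X *ᵥ y := by simpa using hX.dotProduct_mulVec_nonneg y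
  refine le_iff.mpr <| .of_dotProduct_mulVec_nonneg
    (hX.1.sub ((posSemidef_vecMulVec_self _).smul (inv_nonneg.mpr hc)).1) fun v => ?_
  rw [star_trivial, sub_mulVec, smul_mulVec, vecMulVec_self_mulVec, dotProduct_sub,
    dotProduct_smul, dotProduct_smul, smul_eq_mul, smul_eq_mul, dotProduct_comm v (X *ᵥ y),
    hX.1.mulVec_dotProduct, ← sq, sub_nonneg]
  have hv : 0 ≤ v ⬝ᵥ X *ᵥ v := by simpa using hX.dotProduct_mulVec_nonneg v
  rcases hc.eq_or_lt with hc0 | hcpos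
  · simpa [← hc0] using hv
  · rw [inv_mul_le_iff₀ hcpos]
    exact hX.dotProduct_mulVec_sq_le y v

lemma PosSemidef.rank_sub_inv_smul_vecMulVec_mulVec_lt {X : Matrix ι ι ℝ} (hX : X.PosSemidef)
    {y : ι → ℝ} (hy : X *ᵥ y ≠ 0) :
    (X - (y ⬝ᵥ X *ᵥ y)⁻¹ • vecMulVec (X *ᵥ y) (X *ᵥ y)).rank < X.rank := by
  have hc : y ⬝ᵥ X *ᵥ y ≠ 0 := fun h => hy ((hX.dotProduct_mulVec_zero_iff y).mp (by simpa))
  refine rank_lt_rank_of_ker_lt (SetLike.lt_iff_le_and_exists.mpr ⟨fun v hv => ?_, y, ?_, hy⟩)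
  · have hXv : X *ᵥ v = 0 := hv
    simp [vecMulVec_self_mulVec, hX.1.mulVec_dotProduct, hXv]
  · simp [vecMulVec_self_mulVec, dotProduct_comm (X *ᵥ y) y, hc]

end Matrix

variable {n : ℕ} {𝓜 : Set (Matrix (Fin n) (Fin n) ℝ)}

lemma convex_TCone : Convex ℝ (TCone 𝓜) := by
  intro A hA B hB a b ha hb _
  refine ⟨(hA.1.smul ha).add (hB.1.smul hb), fun N hN => ?_⟩
  simp [mul_add, hA.2 N hN, hB.2 N hN]

lemma smul_mem_TCone {c : ℝ} (hc : 0 ≤ c) {X : Matrix (Fin n) (Fin n) ℝ} (hX : X ∈ TCone 𝓜) :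
    c • X ∈ TCone 𝓜 :=
  ⟨hX.1.smul hc, fun N hN => by simp [hX.2 N hN]⟩

lemma sub_mem_TCone_of_le {A B : Matrix (Fin n) (Fin n) ℝ} (hA : A ∈ TCone 𝓜) (hB : B ∈ TCone 𝓜)
    (hBA : B ≤ A) : A - B ∈ TCone 𝓜 :=
  ⟨le_iff.mp hBA, fun N hN => by simp [mul_sub, hA.2 N hN, hB.2 N hN]⟩

lemma vecMulVec_mem_TCone_iff {x : Fin n → ℝ} :
    vecMulVec x x ∈ TCone 𝓜 ↔ ∀ N ∈ 𝓜, x ⬝ᵥ N *ᵥ x = 0 := by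
  simp [TCone, posSemidef_vecMulVec_self, trace_mul_vecMulVec_self]

lemma smul_mem_TCone_inter_rankOneSet {c : ℝ} (hc : 0 ≤ c) {X : Matrix (Fin n) (Fin n) ℝ}
    (hX : X ∈ TCone 𝓜 ∩ RankOneSet n) : c • X ∈ TCone 𝓜 ∩ RankOneSet n := by
  obtain ⟨hXT, x, rfl⟩ := hX
  exact ⟨smul_mem_TCone hc hXT, √c • x, smul_vecMulVec_self hc x⟩

lemma TCone_subset_convexHull_of_forall_exists
    (h : ∀ X ∈ TCone 𝓜, X ≠ 0 → ∃ x : Fin n → ℝ, x ≠ 0 ∧ (∃ y : Fin n → ℝ, X.mulVec y = x) ∧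
      ∀ N ∈ 𝓜, x ⬝ᵥ N.mulVec x = 0) :
    TCone 𝓜 ⊆ convexHull ℝ (TCone 𝓜 ∩ RankOneSet n) := by
  intro X hX
  induction hr : X.rank using Nat.strong_induction_on generalizing X with
  | _ r ih =>
  by_cases hX0 : X = 0
  · subst hX0
    exact subset_convexHull ℝ _ ⟨hX, 0, by simp⟩
  obtain ⟨x, hx0, ⟨y, rfl⟩, hxN⟩ := h X hX hX0
  set R := (y ⬝ᵥ X *ᵥ y)⁻¹ • vecMulVec (X *ᵥ y) (X *ᵥ y)
  have hc : 0 ≤ (y ⬝ᵥ X *ᵥ y)⁻¹ := inv_nonneg.mpr (by simpa using hX.1.dotProduct_mulVec_nonneg y)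
  have hR : R ∈ TCone 𝓜 ∩ RankOneSet n :=
    smul_mem_TCone_inter_rankOneSet hc ⟨vecMulVec_mem_TCone_iff.mpr hxN, _, rfl⟩
  have hXR : X - R ∈ TCone 𝓜 :=
    sub_mem_TCone_of_le hX hR.1 (hX.1.inv_smul_vecMulVec_mulVec_le y)
  rw [← sub_add_cancel X R]
  exact add_mem_convexHull_of_smul_mem
    (fun _ hpos _ hz => smul_mem_TCone_inter_rankOneSet hpos.le hz)
    (ih _ (hr ▸ hX.1.rank_sub_inv_smul_vecMulVec_mulVec_lt hx0) hXR rfl)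
    (subset_convexHull ℝ _ hR)

theorem stmt_8_general {n : ℕ} (𝓜 : Set (Matrix (Fin n) (Fin n) ℝ)) :
    IsROG (TCone 𝓜) ↔
      ∀ X ∈ TCone 𝓜, X ≠ 0 →
        ∃ x : Fin n → ℝ, x ≠ 0 ∧ (∃ y : Fin n → ℝ, X.mulVec y = x) ∧
          ∀ N ∈ 𝓜, x ⬝ᵥ N.mulVec x = 0 := by
  refine ⟨fun hROG X hX hX0 => ?_, fun h => ?_⟩
  · obtain ⟨_, ⟨hzT, x, rfl⟩, hz0, w, hw, hle⟩ := exists_pos_smul_le_of_mem_convexHull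
      (fun z hz => nonneg_iff_posSemidef.mpr hz.1.1) (hROG ▸ hX) hX0
    exact ⟨x, by rintro rfl; simp at hz0, exists_mulVec_eq_of_smul_vecMulVec_le hX.1.1 hw hle,
      vecMulVec_mem_TCone_iff.mp hzT⟩
  · exact (TCone_subset_convexHull_of_forall_exists h).antisymm
      (convexHull_min Set.inter_subset_left convex_TCone)

theorem stmt_8 {n : ℕ} (𝓜 : Set (Matrix (Fin n) (Fin n) ℝ)) (h𝓜 : ∀ N ∈ 𝓜, N.IsSymm) :
    IsROG (TCone 𝓜) ↔
      ∀ X ∈ TCone 𝓜, X ≠ 0 →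
        ∃ x : Fin n → ℝ, x ≠ 0 ∧ (∃ y : Fin n → ℝ, X.mulVec y = x) ∧
          ∀ N ∈ 𝓜, x ⬝ᵥ N.mulVec x = 0 :=
  stmt_8_general 𝓜
end
end

section
/- A 3×3 real symmetric matrix X is doubly nonnegative (positive semidefinite and entrywise nonnegative) if and only if it is completely positive, i.e., X = Σᵢ xᵢxᵢᵀ with each xᵢ ∈ ℝ³ entrywise nonnegative. -/
/-!
Peel off one rank-one term at a time by Gaussian elimination: for a pivot `i`,
`X = (X i i)⁻¹ • vecMulVec (X i) (X i) + S`, where the Schur complement `S` is again positive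
semidefinite and has zero `i`-th row. The rank-one term is nonnegative, and `S` is entrywise
nonnegative as soon as `X i j * X i k ≤ X i i * X j k` for the other indices `j ≠ k`. For a
doubly nonnegative 3 × 3 matrix such a pivot always exists, and what remains is a doubly
nonnegative matrix of order two, for which every pivot works.
-/

open Matrix Set

noncomputable section

-- The pivot conditions at the three indices of a matrix with diagonal `a, b, c` and off-diagonal
-- entries `x = X₁₂, y = X₀₂, z = X₀₁`. If all three fail, their product gives
-- `a * b * c < x * y * z`.
lemma le_or_le_or_le_of_sq_le_mul {a b c x y z : ℝ} (ha : 0 ≤ a) (hb : 0 ≤ b) (hc : 0 ≤ c)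
    (hx : 0 ≤ x) (hy : 0 ≤ y) (hz : 0 ≤ z)
    (hbc : x ^ 2 ≤ b * c) (hac : y ^ 2 ≤ a * c) (hab : z ^ 2 ≤ a * b) :
    y * z ≤ a * x ∨ x * z ≤ b * y ∨ x * y ≤ c * z := by
  by_contra! h
  obtain ⟨h1, h2, h3⟩ := h
  have hyz : 0 < y * z := lt_of_le_of_lt (by positivity) h1
  have hx0 : 0 < x := hx.lt_of_ne (by rintro rfl; nlinarith [mul_nonneg hb hy])
  have hxyz : 0 < x * y * z := by rw [mul_assoc]; positivity
  have hlt : a * b * c < x * y * z := by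
    have := mul_lt_mul'' (mul_lt_mul'' h1 h2 (by positivity) (by positivity)) h3
      (by positivity) (by positivity)
    nlinarith
  have hle : (x * y * z) ^ 2 ≤ (a * b * c) ^ 2 := by
    calc (x * y * z) ^ 2 = x ^ 2 * y ^ 2 * z ^ 2 := by ring
      _ ≤ b * c * (a * c) * (a * b) :=
        mul_le_mul (mul_le_mul hbc hac (by positivity) (by positivity)) hab
          (by positivity) (by positivity)
      _ = (a * b * c) ^ 2 := by ring
  exact hle.not_gt (pow_lt_pow_left₀ hlt (by positivity) two_ne_zero)

namespace Matrix

variable {n : Type*}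

def IsDoublyNonneg (X : Matrix n n ℝ) : Prop :=
  X.PosSemidef ∧ ∀ i j, 0 ≤ X i j

def IsCompletelyPositive (X : Matrix n n ℝ) : Prop :=
  ∃ (k : ℕ) (v : Fin k → n → ℝ), (∀ i j, 0 ≤ v i j) ∧ X = ∑ i, vecMulVec (v i) (v i)

lemma isCompletelyPositive_zero : IsCompletelyPositive (0 : Matrix n n ℝ) :=
  ⟨0, Fin.elim0, fun i => i.elim0, by simp⟩

lemma IsCompletelyPositive.add {X Y : Matrix n n ℝ} (hX : IsCompletelyPositive X)
    (hY : IsCompletelyPositive Y) : IsCompletelyPositive (X + Y) := by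
  obtain ⟨k, v, hv, rfl⟩ := hX
  obtain ⟨l, w, hw, rfl⟩ := hY
  refine ⟨k + l, Fin.append v w, fun i => ?_, ?_⟩
  · cases i using Fin.addCases <;> simp [hv, hw]
  simp [Fin.sum_univ_add]

lemma isCompletelyPositive_smul_vecMulVec_self {c : ℝ} (hc : 0 ≤ c) {x : n → ℝ} (hx : 0 ≤ x) :
    IsCompletelyPositive (c • vecMulVec x x) := by
  refine ⟨1, fun _ => √c • x, fun _ j => mul_nonneg (Real.sqrt_nonneg c) (hx j), ?_⟩
  simp [smul_smul, Real.mul_self_sqrt hc]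

lemma IsCompletelyPositive.isDoublyNonneg [Fintype n] {X : Matrix n n ℝ}
    (hX : IsCompletelyPositive X) : IsDoublyNonneg X := by
  obtain ⟨k, v, hv, rfl⟩ := hX
  refine ⟨posSemidef_sum _ fun i _ => by simpa using posSemidef_vecMulVec_self_star (v i),
    fun i j => ?_⟩
  simp only [sum_apply, vecMulVec_apply]
  exact Finset.sum_nonneg fun l _ => mul_nonneg (hv l i) (hv l j)

namespace PosSemidef

variable {X : Matrix n n ℝ}

lemma apply_symm (hX : X.PosSemidef) (i j : n) : X j i = X i j := by
  simpa using hX.isHermitian.apply i j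

variable [Fintype n] [DecidableEq n]

lemma dotProduct_mulVec_sq_le_s15 (hX : X.PosSemidef) (x y : n → ℝ) :
    (x ⬝ᵥ X *ᵥ y) ^ 2 ≤ (x ⬝ᵥ X *ᵥ x) * (y ⬝ᵥ X *ᵥ y) := by
  have := LinearMap.BilinForm.apply_mul_apply_le_of_forall_zero_le (toLinearMap₂' ℝ X)
    (fun x => by simpa [toLinearMap₂'_apply'] using hX.dotProduct_mulVec_nonneg x) x y
  simp only [toLinearMap₂'_apply'] at this
  have hXt : Xᵀ = X := by simpa using hX.isHermitian.eq
  rwa [dotProduct_mulVec y, ← mulVec_transpose, hXt, dotProduct_comm (X *ᵥ y), ← sq] at this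

lemma mulVec_apply_sq_le (hX : X.PosSemidef) (i : n) (y : n → ℝ) :
    (X *ᵥ y) i ^ 2 ≤ X i i * (y ⬝ᵥ X *ᵥ y) := by
  simpa using hX.dotProduct_mulVec_sq_le_s15 (Pi.single i 1) y

lemma apply_sq_le (hX : X.PosSemidef) (i j : n) : X i j ^ 2 ≤ X i i * X j j := by
  simpa using hX.mulVec_apply_sq_le i (Pi.single j 1)

lemma apply_eq_zero_of_diag_eq_zero (hX : X.PosSemidef) {i : n} (hi : X i i = 0) (j : n) :
    X i j = 0 := by
  have := hX.apply_sq_le i j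
  rw [hi, zero_mul] at this
  exact pow_eq_zero_iff two_ne_zero |>.mp (le_antisymm this (sq_nonneg _))

end PosSemidef

-- When `X i i = 0` the junk value `0⁻¹ = 0` makes this `X` itself, whose `i`-th row vanishes
-- anyway if `X` is positive semidefinite.
def schurCompl (X : Matrix n n ℝ) (i : n) : Matrix n n ℝ :=
  X - (X i i)⁻¹ • vecMulVec (X i) (X i)

lemma schurCompl_apply (X : Matrix n n ℝ) (i j k : n) :
    schurCompl X i j k = X j k - (X i i)⁻¹ * (X i j * X i k) := rfl

lemma eq_smul_vecMulVec_add_schurCompl (X : Matrix n n ℝ) (i : n) :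
    X = (X i i)⁻¹ • vecMulVec (X i) (X i) + schurCompl X i :=
  (add_sub_cancel _ _).symm

lemma IsDoublyNonneg.isCompletelyPositive_of_schurCompl {X : Matrix n n ℝ}
    (hX : IsDoublyNonneg X) {i : n} (h : IsCompletelyPositive (schurCompl X i)) :
    IsCompletelyPositive X := by
  rw [eq_smul_vecMulVec_add_schurCompl X i]
  exact (isCompletelyPositive_smul_vecMulVec_self (inv_nonneg.2 hX.1.diag_nonneg)
    (fun j => hX.2 i j)).add h

variable [Fintype n] [DecidableEq n] {X : Matrix n n ℝ}

lemma posSemidef_schurCompl (hX : X.PosSemidef) (i : n) : (schurCompl X i).PosSemidef := by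
  have hR : (vecMulVec (X i) (X i)).IsHermitian := by
    simpa using (posSemidef_vecMulVec_self_star (X i)).isHermitian
  refine .of_dotProduct_mulVec_nonneg (hX.isHermitian.sub (hR.smul (.all _))) fun y => ?_
  have hq := hX.dotProduct_mulVec_nonneg y
  have hcs := hX.mulVec_apply_sq_le i y
  simp only [star_trivial] at hq ⊢
  simp only [Matrix.schurCompl, sub_mulVec, smul_mulVec, vecMulVec_mulVec, dotProduct_sub,
    dotProduct_smul]
  have key : (X i i)⁻¹ * (X *ᵥ y) i ^ 2 ≤ y ⬝ᵥ X *ᵥ y := by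
    rcases eq_or_ne (X i i) 0 with h | h
    · simpa [h] using hq
    · rwa [inv_mul_le_iff₀ (hX.diag_nonneg.lt_of_ne' h)]
  have hrow : X i ⬝ᵥ y = (X *ᵥ y) i := rfl
  rw [op_smul_eq_mul, smul_eq_mul, dotProduct_comm y (X i), hrow, ← sq]
  exact sub_nonneg.2 key

lemma schurCompl_apply_self_left (hX : X.PosSemidef) (i j : n) :
    schurCompl X i i j = 0 := by
  rw [schurCompl_apply]
  rcases eq_or_ne (X i i) 0 with h | h
  · simp [h, hX.apply_eq_zero_of_diag_eq_zero h j]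
  · field_simp; ring

lemma schurCompl_apply_self_right (hX : X.PosSemidef) (i j : n) :
    schurCompl X i j i = 0 := by
  rw [(posSemidef_schurCompl hX i).apply_symm, schurCompl_apply_self_left hX]

lemma isDoublyNonneg_schurCompl (hX : IsDoublyNonneg X) {i : n}
    (hpiv : ∀ j k, j ≠ i → k ≠ i → j ≠ k → X i j * X i k ≤ X i i * X j k) :
    IsDoublyNonneg (schurCompl X i) := by
  refine ⟨posSemidef_schurCompl hX.1 i, fun j k => ?_⟩
  rcases eq_or_ne j i with rfl | hj
  · exact (schurCompl_apply_self_left hX.1 j k).ge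
  rcases eq_or_ne k i with rfl | hk
  · exact (schurCompl_apply_self_right hX.1 k j).ge
  rcases eq_or_ne j k with rfl | hjk
  · exact (posSemidef_schurCompl hX.1 i).diag_nonneg
  rw [schurCompl_apply, sub_nonneg]
  rcases (hX.1.diag_nonneg (i := i)).eq_or_lt with h | h
  · simpa [← h] using hX.2 j k
  · rw [inv_mul_le_iff₀ h]
    exact hpiv j k hj hk hjk

lemma IsDoublyNonneg.isCompletelyPositive_of_rows_eq_zero (hX : IsDoublyNonneg X)
    {s : Finset n} (hs : s.card ≤ 2) (hrow : ∀ i ∉ s, ∀ j, X i j = 0) :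
    IsCompletelyPositive X := by
  induction s using Finset.induction_on generalizing X with
  | empty =>
    convert isCompletelyPositive_zero
    ext i j
    exact hrow i (Finset.notMem_empty i) j
  | insert a s ha ih =>
    rw [Finset.card_insert_of_notMem ha] at hs
    have hcol : ∀ i ∉ insert a s, X a i = 0 := fun i hi => by
      rw [← hX.1.apply_symm]; exact hrow i hi a
    refine hX.isCompletelyPositive_of_schurCompl (i := a) (ih ?_ (by omega) fun i hi j => ?_)
    · refine isDoublyNonneg_schurCompl hX fun j k hj hk hjk => ?_
      have : j ∉ insert a s ∨ k ∉ insert a s := by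
        by_contra! h
        simp only [Finset.mem_insert, hj, hk, false_or] at h
        exact hjk (Finset.card_le_one.1 (by omega) j h.1 k h.2)
      have h0 : X a j * X a k = 0 := by rcases this with h | h <;> simp [hcol _ h]
      rw [h0]
      exact mul_nonneg hX.1.diag_nonneg (hX.2 j k)
    · rcases eq_or_ne i a with rfl | hia
      · exact schurCompl_apply_self_left hX.1 i j
      · have hi' : i ∉ insert a s := by simp [hia, hi]
        simp [schurCompl_apply, hrow i hi', hcol i hi']

lemma IsDoublyNonneg.exists_pivot_fin_three {X : Matrix (Fin 3) (Fin 3) ℝ}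
    (hX : IsDoublyNonneg X) :
    ∃ i, ∀ j k, j ≠ i → k ≠ i → j ≠ k → X i j * X i k ≤ X i i * X j k := by
  obtain ⟨hpsd, hnn⟩ := hX
  have h10 := hpsd.apply_symm 0 1
  have h20 := hpsd.apply_symm 0 2
  have h21 := hpsd.apply_symm 1 2
  rcases le_or_le_or_le_of_sq_le_mul (hnn 0 0) (hnn 1 1) (hnn 2 2) (hnn 1 2) (hnn 0 2) (hnn 0 1)
    (hpsd.apply_sq_le 1 2) (hpsd.apply_sq_le 0 2) (hpsd.apply_sq_le 0 1) with h | h | h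
  · refine ⟨0, fun j k hj hk hjk => ?_⟩
    fin_cases j <;> fin_cases k <;> simp_all [mul_comm]
  · refine ⟨1, fun j k hj hk hjk => ?_⟩
    fin_cases j <;> fin_cases k <;> simp_all [mul_comm]
  · refine ⟨2, fun j k hj hk hjk => ?_⟩
    fin_cases j <;> fin_cases k <;> simp_all [mul_comm]

theorem IsDoublyNonneg.isCompletelyPositive_fin_three {X : Matrix (Fin 3) (Fin 3) ℝ}
    (hX : IsDoublyNonneg X) : IsCompletelyPositive X := by
  obtain ⟨i, hi⟩ := hX.exists_pivot_fin_three
  refine hX.isCompletelyPositive_of_schurCompl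
    ((isDoublyNonneg_schurCompl hX hi).isCompletelyPositive_of_rows_eq_zero
      (s := Finset.univ.erase i) (by simp) fun j hj k => ?_)
  rw [Finset.mem_erase, not_and_or, not_not] at hj
  obtain rfl := hj.resolve_right (by simp)
  exact schurCompl_apply_self_left hX.1 j k

end Matrix

theorem stmt_15 (X : Matrix (Fin 3) (Fin 3) ℝ) :
    (X.PosSemidef ∧ ∀ i j, 0 ≤ X i j) ↔
      ∃ (k : ℕ) (v : Fin k → Fin 3 → ℝ), (∀ i j, 0 ≤ v i j) ∧
        X = ∑ i, vecMulVec (v i) (v i) :=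
  ⟨IsDoublyNonneg.isCompletelyPositive_fin_three, IsCompletelyPositive.isDoublyNonneg⟩
end
end
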